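/- The series ∑_{k≥1} ((2↑↑k)·𝓓_k − 1/2) converges absolutely, where 𝓓_k is the natural density of {n : H(n) = k}. -/

import Mathlib

/-- Tetration base 2: `tet 0 = 1`, `tet (m+1) = 2 ^ tet m`. -/
def tet : ℕ → ℕ
  | 0 => 1
  | m + 1 => 2 ^ tet m

/-- Height of the super-factorization tree of `n`:
`H 1 = 0` and `H n = 1 + max_{p^α ∥ n} H α` for `n > 1`. -/
def H : ℕ → ℕ
  | n =>
    if h : n ≤ 1 then 0
    else 1 + (n.primeFactors.attach.sup fun p => H (n.factorization p.1))
decreasing_by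
  exact Nat.factorization_lt _ (by omega)

/-!
Fix `k = j + 2` with `j ≥ 1` and put `t = tet (j + 1)`, so that `H t = k - 1`. If `H n = k`, some
prime `p` has `H (v_p n) = k - 1`, hence `v_p n ≥ t`; for `p = 2` the recursion once more shows
that `v_2 n` is either `t` or at least `2t`, because `tet (j + 1) = 2 ^ tet j` and
`3 ^ tet j ≥ 2 * tet (j + 1)`. Conversely `v_2 n = t` gives `H n = k` unless `p ^ t ∣ n` for some
odd prime `p`. So `{H = k}` agrees with `{v_2 = t}`, of density `2 ^ -(t + 1)`, up to multiples of
`4 ^ t` or of some `m ^ t` with `m ≥ 3`, of density at most `7 / 3 ^ t`. Multiplying by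
`tet k = 2 ^ t` gives `|tet k * 𝓓_k - 1/2| ≤ 7 (2/3) ^ t ≤ 7 (2/3) ^ (j + 1)`.
-/
open Finset Filter Topology

lemma tet_succ (m : ℕ) : tet (m + 1) = 2 ^ tet m := rfl

lemma lt_tet (m : ℕ) : m < tet m := by
  induction m with
  | zero => exact Nat.one_pos
  | succ m ih => exact (Nat.succ_le_of_lt ih).trans_lt Nat.lt_two_pow_self

lemma factorization_ne_zero_of_mem_primeFactors {n p : ℕ} (hp : p ∈ n.primeFactors) :
    n.factorization p ≠ 0 :=
  Finsupp.mem_support_iff.1 hp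

lemma H_of_le_one {n : ℕ} (hn : n ≤ 1) : H n = 0 := by
  rw [H, dif_pos hn]

lemma H_of_two_le {n : ℕ} (hn : 2 ≤ n) :
    H n = (n.primeFactors.sup fun p => H (n.factorization p)) + 1 := by
  rw [H, dif_neg (by omega), add_comm]
  exact congrArg (· + 1) (sup_attach n.primeFactors fun p => H (n.factorization p))

lemma exists_mem_primeFactors_H_eq {n : ℕ} (hn : 2 ≤ n) :
    ∃ p ∈ n.primeFactors, H n = H (n.factorization p) + 1 := by
  obtain ⟨p, hp, hsup⟩ := exists_mem_eq_sup n.primeFactors (Nat.nonempty_primeFactors.2 hn)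
    fun p => H (n.factorization p)
  exact ⟨p, hp, by rw [H_of_two_le hn, hsup]⟩

lemma two_le_of_H_ne_zero {n : ℕ} (h : H n ≠ 0) : 2 ≤ n := by
  by_contra! hn
  exact h (H_of_le_one (by omega))

lemma H_two_pow {a : ℕ} (ha : a ≠ 0) : H (2 ^ a) = H a + 1 := by
  rw [H_of_two_le (Nat.le_self_pow ha 2), Nat.primeFactors_prime_pow ha Nat.prime_two,
    sup_singleton, Nat.prime_two.factorization_pow, Finsupp.single_eq_same]

lemma H_tet (m : ℕ) : H (tet m) = m := by
  induction m with
  | zero => exact H_of_le_one le_rfl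
  | succ m ih => rw [tet_succ, H_two_pow (lt_tet m).ne_bot, ih]

lemma tet_le_of_le_H {m n : ℕ} (hn : n ≠ 0) (h : m ≤ H n) : tet m ≤ n := by
  induction n using Nat.strong_induction_on generalizing m with
  | _ n ih =>
    cases m with
    | zero => exact Nat.one_le_iff_ne_zero.2 hn
    | succ m =>
      obtain ⟨p, hp, hHp⟩ := exists_mem_primeFactors_H_eq (two_le_of_H_ne_zero (n := n) (by omega))
      have hvp : tet m ≤ n.factorization p := ih _ (Nat.factorization_lt p hn)
        (factorization_ne_zero_of_mem_primeFactors hp) (by omega)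
      have hp2 := (Nat.prime_of_mem_primeFactors hp).two_le
      calc tet (m + 1) = 2 ^ tet m := rfl
        _ ≤ p ^ tet m := Nat.pow_le_pow_left hp2 _
        _ ≤ p ^ n.factorization p := Nat.pow_le_pow_right (by omega) hvp
        _ ≤ n := Nat.ordProj_le p hn

lemma two_pow_succ_le_three_pow {s : ℕ} (hs : 2 ≤ s) : 2 ^ (s + 1) ≤ 3 ^ s := by
  induction s, hs using Nat.le_induction with
  | base => norm_num
  | succ s _ ih => rw [pow_succ, pow_succ 3]; omega

lemma two_mul_tet_le_of_H_eq {a j : ℕ} (hj : j ≠ 0) (ha : H a = j + 1)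
    (hne : a ≠ tet (j + 1)) : 2 * tet (j + 1) ≤ a := by
  obtain ⟨q, hq, hHq⟩ := exists_mem_primeFactors_H_eq (two_le_of_H_ne_zero (n := a) (by omega))
  have ha0 : a ≠ 0 := (Nat.mem_primeFactors.1 hq).2.2
  have hs : tet j ≤ a.factorization q :=
    tet_le_of_le_H (factorization_ne_zero_of_mem_primeFactors hq) (by omega)
  have hdvd : q ^ tet j ∣ a := (pow_dvd_pow q hs).trans (Nat.ordProj_dvd a q)
  rcases eq_or_ne q 2 with rfl | hq2
  · -- `a` is a multiple of `tet (j + 1) = 2 ^ tet j` other than itself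
    obtain ⟨c, rfl⟩ := hdvd
    have hc : 2 ≤ c := by
      rcases c with _ | _ | c
      · exact absurd rfl ha0
      · exact absurd (mul_one _) hne
      · omega
    rw [tet_succ, mul_comm]
    exact Nat.mul_le_mul_left _ hc
  · have hq3 : 3 ≤ q := by have := (Nat.prime_of_mem_primeFactors hq).two_le; omega
    calc 2 * tet (j + 1) = 2 ^ (tet j + 1) := by rw [tet_succ, pow_succ, mul_comm]
      _ ≤ 3 ^ tet j := two_pow_succ_le_three_pow (by have := lt_tet j; omega)
      _ ≤ q ^ tet j := Nat.pow_le_pow_left hq3 _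
      _ ≤ a := Nat.le_of_dvd (Nat.pos_of_ne_zero ha0) hdvd

lemma H_eq_of_factorization_two_eq {n j : ℕ} (h2 : n.factorization 2 = tet (j + 1))
    (hodd : ∀ p ∈ n.primeFactors, p ≠ 2 → n.factorization p < tet (j + 1)) : H n = j + 2 := by
  have h2mem : 2 ∈ n.primeFactors := Finsupp.mem_support_iff.2 (by rw [h2]; exact (lt_tet _).ne_bot)
  suffices hsup : (n.primeFactors.sup fun p => H (n.factorization p)) = j + 1 by
    rw [H_of_two_le (Nat.le_of_mem_primeFactors h2mem), hsup]
  refine le_antisymm (Finset.sup_le fun p hp => ?_) (le_sup_of_le h2mem (by rw [h2, H_tet]))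
  rcases eq_or_ne p 2 with rfl | hp2
  · rw [h2, H_tet]
  · by_contra! hlt
    exact (tet_le_of_le_H (factorization_ne_zero_of_mem_primeFactors hp) hlt.le).not_gt
      (hodd p hp hp2)

lemma factorization_two_eq_or_of_H_eq {n j : ℕ} (hj : j ≠ 0) (h : H n = j + 2) :
    n.factorization 2 = tet (j + 1) ∨ 2 ^ (2 * tet (j + 1)) ∣ n ∨
      ∃ p ∈ n.primeFactors, 3 ≤ p ∧ p ^ tet (j + 1) ∣ n := by
  obtain ⟨p, hp, hHp⟩ := exists_mem_primeFactors_H_eq (two_le_of_H_ne_zero (n := n) (by omega))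
  have hv : tet (j + 1) ≤ n.factorization p :=
    tet_le_of_le_H (factorization_ne_zero_of_mem_primeFactors hp) (by omega)
  rcases eq_or_ne p 2 with rfl | hp2
  · refine or_iff_not_imp_left.2 fun hne => Or.inl ?_
    have h2t := two_mul_tet_le_of_H_eq hj (by omega) hne
    exact (pow_dvd_pow 2 h2t).trans (Nat.ordProj_dvd n 2)
  · have hp3 : 3 ≤ p := by have := (Nat.prime_of_mem_primeFactors hp).two_le; omega
    exact Or.inr (Or.inr ⟨p, hp, hp3, (pow_dvd_pow p hv).trans (Nat.ordProj_dvd n p)⟩)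

def highPowerMultiples (t x : ℕ) : Finset ℕ :=
  {n ∈ Icc 1 x | 2 ^ (2 * t) ∣ n} ∪ (Icc 3 x).biUnion fun m => {n ∈ Icc 1 x | m ^ t ∣ n}

lemma sdiff_highPowerMultiples_subset (j x : ℕ) :
    {n ∈ Icc 1 x | n.factorization 2 = tet (j + 1)} \ highPowerMultiples (tet (j + 1)) x ⊆
      {n ∈ Icc 1 x | H n = j + 2} := by
  intro n
  simp only [highPowerMultiples, Finset.mem_sdiff, mem_filter, Finset.mem_union,
    Finset.mem_biUnion, mem_Icc, not_or, not_exists, not_and]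
  rintro ⟨⟨hn, h2⟩, -, hodd⟩
  refine ⟨hn, H_eq_of_factorization_two_eq h2 fun p hp hp2 => ?_⟩
  by_contra! hle
  have hp3 : 3 ≤ p := by have := (Nat.prime_of_mem_primeFactors hp).two_le; omega
  exact hodd p ⟨hp3, (Nat.le_of_mem_primeFactors hp).trans hn.2⟩ hn
    ((pow_dvd_pow p hle).trans (Nat.ordProj_dvd n p))

lemma subset_union_highPowerMultiples {j : ℕ} (hj : j ≠ 0) (x : ℕ) :
    {n ∈ Icc 1 x | H n = j + 2} ⊆
      {n ∈ Icc 1 x | n.factorization 2 = tet (j + 1)} ∪ highPowerMultiples (tet (j + 1)) x := by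
  intro n
  simp only [highPowerMultiples, mem_filter, Finset.mem_union, Finset.mem_biUnion, mem_Icc]
  rintro ⟨hn, hH⟩
  rcases factorization_two_eq_or_of_H_eq hj hH with h2 | h2 | ⟨p, hp, hp3, hdvd⟩
  · exact .inl ⟨hn, h2⟩
  · exact .inr (.inl ⟨hn, h2⟩)
  · exact .inr (.inr ⟨p, ⟨hp3, (Nat.le_of_mem_primeFactors hp).trans hn.2⟩, hn, hdvd⟩)

lemma card_filter_dvd_Icc_one (x d : ℕ) : #{n ∈ Icc 1 x | d ∣ n} = x / d :=
  Nat.Ioc_filter_dvd_card_eq_div x d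

lemma card_filter_factorization_eq_add {p : ℕ} (hp : p.Prime) (x t : ℕ) :
    #{n ∈ Icc 1 x | n.factorization p = t} + x / p ^ (t + 1) = x / p ^ t := by
  have hsplit : {n ∈ Icc 1 x | n.factorization p = t} =
      {n ∈ Icc 1 x | p ^ t ∣ n} \ {n ∈ Icc 1 x | p ^ (t + 1) ∣ n} := by
    ext n
    simp only [Finset.mem_sdiff, mem_filter, mem_Icc]
    constructor
    · rintro ⟨hn, hv⟩
      rw [hp.pow_dvd_iff_le_factorization (by omega), hp.pow_dvd_iff_le_factorization (by omega)]
      omega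
    · rintro ⟨⟨hn, ht⟩, hnt⟩
      rw [hp.pow_dvd_iff_le_factorization (by omega)] at ht
      rw [hp.pow_dvd_iff_le_factorization (by omega)] at hnt
      exact ⟨hn, by omega⟩
  have hsub : {n ∈ Icc 1 x | p ^ (t + 1) ∣ n} ⊆ {n ∈ Icc 1 x | p ^ t ∣ n} :=
    monotone_filter_right _ fun n _ h => (pow_dvd_pow p t.le_succ).trans h
  rw [hsplit, ← card_filter_dvd_Icc_one, ← card_filter_dvd_Icc_one,
    card_sdiff_add_card_eq_card hsub]

lemma sub_one_lt_cast_div (x d : ℕ) : (x : ℝ) / d - 1 < ((x / d : ℕ) : ℝ) := by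
  rw [← Nat.floor_div_eq_div (K := ℝ)]
  exact Nat.sub_one_lt_floor _

lemma abs_card_filter_factorization_two_sub_le (x t : ℕ) :
    |(#{n ∈ Icc 1 x | n.factorization 2 = t} : ℝ) - x / 2 ^ (t + 1)| ≤ 1 := by
  have hcard : (#{n ∈ Icc 1 x | n.factorization 2 = t} : ℝ) =
      ((x / 2 ^ t : ℕ) : ℝ) - ((x / 2 ^ (t + 1) : ℕ) : ℝ) := by
    rw [eq_sub_iff_add_eq]
    exact_mod_cast card_filter_factorization_eq_add Nat.prime_two x t
  have h₁ := sub_one_lt_cast_div x (2 ^ t)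
  have h₂ := sub_one_lt_cast_div x (2 ^ (t + 1))
  have h₃ : ((x / 2 ^ t : ℕ) : ℝ) ≤ x / ((2 ^ t : ℕ) : ℝ) := Nat.cast_div_le
  have h₄ : ((x / 2 ^ (t + 1) : ℕ) : ℝ) ≤ x / ((2 ^ (t + 1) : ℕ) : ℝ) := Nat.cast_div_le
  push_cast at h₁ h₂ h₃ h₄
  have hx : (x : ℝ) / 2 ^ t = 2 * (x / 2 ^ (t + 1)) := by rw [pow_succ]; field_simp
  rw [hcard, abs_le]
  constructor <;> linarith

lemma sum_inv_pow_le {t : ℕ} (ht : 2 ≤ t) (x : ℕ) :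
    ∑ m ∈ Icc 3 x, ((m : ℝ) ^ t)⁻¹ ≤ 6 / 3 ^ t := by
  have hterm : ∀ m ∈ Icc 3 x, ((m : ℝ) ^ t)⁻¹ ≤ 9 / 3 ^ t * ((m : ℝ) ^ 2)⁻¹ := by
    intro m hm
    have hm3 : (3 : ℝ) ≤ m := by exact_mod_cast (mem_Icc.1 hm).1
    have hm0 : (0 : ℝ) < m := by linarith
    calc ((m : ℝ) ^ t)⁻¹ = (3 / m) ^ t / 3 ^ t := by rw [div_pow]; field_simp
      _ ≤ (3 / m) ^ 2 / 3 ^ t := div_le_div_of_nonneg_right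
        (pow_le_pow_of_le_one (by positivity) ((div_le_one hm0).2 hm3) ht) (by positivity)
      _ = 9 / 3 ^ t * ((m : ℝ) ^ 2)⁻¹ := by ring
  have hIcc : Icc 3 x = Ioo 2 (x + 1) := by ext; simp; omega
  calc ∑ m ∈ Icc 3 x, ((m : ℝ) ^ t)⁻¹ ≤ ∑ m ∈ Icc 3 x, 9 / 3 ^ t * ((m : ℝ) ^ 2)⁻¹ :=
        sum_le_sum hterm
    _ = 9 / 3 ^ t * ∑ m ∈ Ioo 2 (x + 1), ((m : ℝ) ^ 2)⁻¹ := by rw [← mul_sum, hIcc]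
    _ ≤ 9 / 3 ^ t * (2 / (2 + 1)) := by gcongr; exact_mod_cast sum_Ioo_inv_sq_le 2 (x + 1)
    _ = 6 / 3 ^ t := by ring

lemma card_highPowerMultiples_le {t : ℕ} (ht : 2 ≤ t) (x : ℕ) :
    (#(highPowerMultiples t x) : ℝ) ≤ 7 / 3 ^ t * x := by
  have hcard : #(highPowerMultiples t x) ≤ x / 2 ^ (2 * t) + ∑ m ∈ Icc 3 x, x / m ^ t := by
    refine (card_union_le _ _).trans (add_le_add (card_filter_dvd_Icc_one x _).le ?_)
    exact card_biUnion_le.trans (sum_le_sum fun m _ => (card_filter_dvd_Icc_one x _).le)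
  have hpow2 : ((x / 2 ^ (2 * t) : ℕ) : ℝ) ≤ 1 / 3 ^ t * x := by
    calc ((x / 2 ^ (2 * t) : ℕ) : ℝ) ≤ x / ((2 ^ (2 * t) : ℕ) : ℝ) := Nat.cast_div_le
      _ = x / 4 ^ t := by push_cast; rw [pow_mul]; norm_num
      _ ≤ x / 3 ^ t := by gcongr; norm_num
      _ = 1 / 3 ^ t * x := by ring
  have hsum : ∑ m ∈ Icc 3 x, ((x / m ^ t : ℕ) : ℝ) ≤ 6 / 3 ^ t * x := by
    calc ∑ m ∈ Icc 3 x, ((x / m ^ t : ℕ) : ℝ) ≤ ∑ m ∈ Icc 3 x, (x : ℝ) * ((m : ℝ) ^ t)⁻¹ := by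
          refine sum_le_sum fun m _ => ?_
          rw [← div_eq_mul_inv]
          exact_mod_cast Nat.cast_div_le
      _ = x * ∑ m ∈ Icc 3 x, ((m : ℝ) ^ t)⁻¹ := by rw [mul_sum]
      _ ≤ x * (6 / 3 ^ t) := by gcongr; exact sum_inv_pow_le ht x
      _ = 6 / 3 ^ t * x := by ring
  calc (#(highPowerMultiples t x) : ℝ)
      ≤ ((x / 2 ^ (2 * t) : ℕ) : ℝ) + ∑ m ∈ Icc 3 x, ((x / m ^ t : ℕ) : ℝ) := by
        exact_mod_cast hcard
    _ ≤ 1 / 3 ^ t * x + 6 / 3 ^ t * x := add_le_add hpow2 hsum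
    _ = 7 / 3 ^ t * x := by ring

lemma abs_card_sub_card_le_card {α : Type*} [DecidableEq α] {S A E : Finset α}
    (hlow : A \ E ⊆ S) (hup : S ⊆ A ∪ E) : |(#S : ℝ) - #A| ≤ #E := by
  have h₁ : #S ≤ #A + #E := (card_le_card hup).trans (card_union_le A E)
  have h₂ : #A ≤ #S + #E := card_le_card_sdiff_add_card.trans (by gcongr)
  rw [abs_le]
  constructor
  · have : (#A : ℝ) ≤ #S + #E := by exact_mod_cast h₂
    linarith
  · have : (#S : ℝ) ≤ #A + #E := by exact_mod_cast h₁
    linarith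

lemma abs_sub_le_of_tendsto_div {f : ℕ → ℝ} {d a b c : ℝ}
    (hf : Tendsto (fun x : ℕ => f x / x) atTop (𝓝 d)) (h : ∀ x : ℕ, |f x - a * x| ≤ b * x + c) :
    |d - a| ≤ b := by
  have hlim : Tendsto (fun x : ℕ => b + c / x) atTop (𝓝 b) := by
    simpa using tendsto_const_nhds.add (tendsto_const_div_atTop_nhds_zero_nat c)
  refine le_of_tendsto_of_tendsto (hf.sub_const a).abs hlim ?_
  filter_upwards [eventually_gt_atTop 0] with x hx
  have hx' : (0 : ℝ) < x := by exact_mod_cast hx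
  calc |f x / x - a| = |f x - a * x| / x := by
        rw [← abs_of_pos hx', ← abs_div, abs_of_pos hx', sub_div, mul_div_cancel_right₀ _ hx'.ne']
    _ ≤ (b * x + c) / x := by gcongr; exact h x
    _ = b + c / x := by field_simp

lemma abs_tet_mul_sub_half_le {j : ℕ} {d : ℝ} (hj : j ≠ 0)
    (hd : Tendsto (fun x : ℕ => (#{n ∈ Icc 1 x | H n = j + 2} : ℝ) / x) atTop (𝓝 d)) :
    |(tet (j + 2) : ℝ) * d - 1 / 2| ≤ 7 * (2 / 3) ^ tet (j + 1) := by
  set t := tet (j + 1)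
  have ht : 2 ≤ t := by have := lt_tet (j + 1); omega
  have hcount : ∀ x : ℕ,
      |(#{n ∈ Icc 1 x | H n = j + 2} : ℝ) - 1 / 2 ^ (t + 1) * x| ≤ 7 / 3 ^ t * x + 1 := by
    intro x
    have hA := abs_card_filter_factorization_two_sub_le x t
    have hSA := abs_card_sub_card_le_card (sdiff_highPowerMultiples_subset j x)
      (subset_union_highPowerMultiples hj x)
    have hE := card_highPowerMultiples_le ht x
    rw [one_div_mul_eq_div]
    calc _ ≤ _ := abs_sub_le _ (#{n ∈ Icc 1 x | n.factorization 2 = t} : ℝ) _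
      _ ≤ 7 / 3 ^ t * x + 1 := by linarith
  have hD := abs_sub_le_of_tendsto_div hd hcount
  have htet : (tet (j + 2) : ℝ) = 2 ^ t := by rw [tet_succ]; push_cast; rfl
  calc |(tet (j + 2) : ℝ) * d - 1 / 2| = |2 ^ t * (d - 1 / 2 ^ (t + 1))| := by
        rw [htet, pow_succ]
        field_simp
    _ = 2 ^ t * |d - 1 / 2 ^ (t + 1)| := by rw [abs_mul, abs_of_pos (by positivity)]
    _ ≤ 2 ^ t * (7 / 3 ^ t) := by gcongr
    _ = 7 * (2 / 3) ^ t := by rw [div_pow]; ring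

theorem stmt17 (D : ℕ → ℝ)
    (hD : ∀ k : ℕ,
      Filter.Tendsto
        (fun x : ℕ => (((Finset.Icc 1 x).filter fun n => H n = k).card : ℝ) / x)
        Filter.atTop (nhds (D k))) :
    Summable (fun k : ℕ => |(tet (k + 1) : ℝ) * D (k + 1) - 1 / 2|) := by
  have hgeom : Summable fun k : ℕ => 7 * (2 / 3 : ℝ) ^ k :=
    (summable_geometric_of_lt_one (by norm_num) (by norm_num)).mul_left 7
  refine hgeom.of_norm_bounded_eventually_nat ?_
  filter_upwards [eventually_ge_atTop 2] with k hk
  obtain ⟨j, rfl⟩ : ∃ j, k = j + 1 := ⟨k - 1, by omega⟩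
  rw [Real.norm_eq_abs, abs_abs]
  calc |(tet (j + 2) : ℝ) * D (j + 2) - 1 / 2| ≤ 7 * (2 / 3) ^ tet (j + 1) :=
        abs_tet_mul_sub_half_le (by omega) (hD (j + 2))
    _ ≤ 7 * (2 / 3) ^ (j + 1) := by
        gcongr 7 * ?_
        exact pow_le_pow_of_le_one (by norm_num) (by norm_num) (lt_tet _).le
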